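/- Consider the tripartite Heisenberg XXX Hamiltonian H = J Σ_{l=1}^{3} Σ_{i=1}^{3} σ_i^l σ_i^{l+1} on (ℂ²)^{⊗3} with periodic boundary conditions (σ^4 = σ^1) and J > 0. Then H = −3J·𝟙 + 2J(F₁₂ + F₂₃ + F₃₁), where F_{ab} is the swap operator between qubits a and b; consequently, for any fully separable state ε = Σ_k q_k ρ₁^k⊗ρ₂^k⊗ρ₃^k, Tr[εH] ≥ −3J. -/

import Mathlib

open Matrix ComplexOrder

/-!
Summing the two-qubit Pauli identity `∑ᵢ σᵢ ⊗ σᵢ = 2F − 𝟙` over the three bonds gives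
`H = −3J·𝟙 + 2J(F₁₂ + F₂₃ + F₃₁)`. On a product state `ρ₁ ⊗ ρ₂ ⊗ ρ₃` of unit-trace factors the
swap `F_ab` has expectation `Tr[ρ_a ρ_b]`, which is nonnegative for positive semidefinite
`ρ_a, ρ_b` (write `ρ_a = CᴴC`, so `Tr[ρ_a ρ_b] = Tr[C ρ_b Cᴴ]`). Hence every product state has
energy at least `−3J` when `J ≥ 0`, and the bound passes to convex combinations by linearity of
the trace.
-/

/-- The three Pauli matrices. -/
def pauli : Fin 3 → Matrix (Fin 2) (Fin 2) ℂ
  | 0 => !![0, 1; 1, 0]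
  | 1 => !![0, -Complex.I; Complex.I, 0]
  | 2 => !![1, 0; 0, -1]

/-- `M ⊗ N ⊗ 𝟙` acting on sites (1,2) of three qubits. -/
def op12 (M N : Matrix (Fin 2) (Fin 2) ℂ) :
    Matrix (Fin 2 × Fin 2 × Fin 2) (Fin 2 × Fin 2 × Fin 2) ℂ :=
  fun p q => M p.1 q.1 * N p.2.1 q.2.1 * (if p.2.2 = q.2.2 then 1 else 0)

/-- `𝟙 ⊗ M ⊗ N` acting on sites (2,3) of three qubits. -/
def op23 (M N : Matrix (Fin 2) (Fin 2) ℂ) :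
    Matrix (Fin 2 × Fin 2 × Fin 2) (Fin 2 × Fin 2 × Fin 2) ℂ :=
  fun p q => (if p.1 = q.1 then 1 else 0) * M p.2.1 q.2.1 * N p.2.2 q.2.2

/-- `N ⊗ 𝟙 ⊗ M` acting on sites (3,1) of three qubits. -/
def op31 (M N : Matrix (Fin 2) (Fin 2) ℂ) :
    Matrix (Fin 2 × Fin 2 × Fin 2) (Fin 2 × Fin 2 × Fin 2) ℂ :=
  fun p q => N p.1 q.1 * (if p.2.1 = q.2.1 then 1 else 0) * M p.2.2 q.2.2

/-- The swap operator between qubits 1 and 2. -/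
def swap12 : Matrix (Fin 2 × Fin 2 × Fin 2) (Fin 2 × Fin 2 × Fin 2) ℂ :=
  fun p q => if p.1 = q.2.1 ∧ p.2.1 = q.1 ∧ p.2.2 = q.2.2 then 1 else 0

/-- The swap operator between qubits 2 and 3. -/
def swap23 : Matrix (Fin 2 × Fin 2 × Fin 2) (Fin 2 × Fin 2 × Fin 2) ℂ :=
  fun p q => if p.1 = q.1 ∧ p.2.1 = q.2.2 ∧ p.2.2 = q.2.1 then 1 else 0

/-- The swap operator between qubits 3 and 1. -/
def swap31 : Matrix (Fin 2 × Fin 2 × Fin 2) (Fin 2 × Fin 2 × Fin 2) ℂ :=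
  fun p q => if p.1 = q.2.2 ∧ p.2.1 = q.2.1 ∧ p.2.2 = q.1 then 1 else 0

/-- The tripartite Heisenberg XXX Hamiltonian
`H = J Σ_{l=1}^{3} Σ_{i=1}^{3} σ_i^l σ_i^{l+1}` with periodic boundary conditions. -/
noncomputable def xxxTriHamiltonian (J : ℝ) :
    Matrix (Fin 2 × Fin 2 × Fin 2) (Fin 2 × Fin 2 × Fin 2) ℂ :=
  (J : ℂ) • ∑ i : Fin 3,
    (op12 (pauli i) (pauli i) + op23 (pauli i) (pauli i) + op31 (pauli i) (pauli i))

/-- A product state `ρ₁ ⊗ ρ₂ ⊗ ρ₃` of three qubits. -/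
def prod3 (ρ₁ ρ₂ ρ₃ : Matrix (Fin 2) (Fin 2) ℂ) :
    Matrix (Fin 2 × Fin 2 × Fin 2) (Fin 2 × Fin 2 × Fin 2) ℂ :=
  fun p q => ρ₁ p.1 q.1 * ρ₂ p.2.1 q.2.1 * ρ₃ p.2.2 q.2.2


/-- Entrywise form of `∑ᵢ σᵢ ⊗ σᵢ = 2F − 𝟙`. -/
lemma pauli_completeness (a b c d : Fin 2) :
    ∑ i, pauli i a b * pauli i c d
      = 2 * (if a = d ∧ c = b then 1 else 0) - (if a = b ∧ c = d then 1 else 0) := by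
  fin_cases a <;> fin_cases b <;> fin_cases c <;> fin_cases d <;>
    simp [Fin.sum_univ_three, pauli] <;> norm_num

lemma sum_op12_pauli : ∑ i, op12 (pauli i) (pauli i) = (2 : ℂ) • swap12 - 1 := by
  ext ⟨a, b, c⟩ ⟨d, e, f⟩
  simp only [Matrix.sum_apply, op12, ← Finset.sum_mul, pauli_completeness]
  by_cases c = f <;> simp [swap12, Matrix.one_apply, *]

lemma sum_op23_pauli : ∑ i, op23 (pauli i) (pauli i) = (2 : ℂ) • swap23 - 1 := by
  ext ⟨a, b, c⟩ ⟨d, e, f⟩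
  simp only [Matrix.sum_apply, op23, mul_assoc, ← Finset.mul_sum, pauli_completeness]
  by_cases a = d <;> simp [swap23, Matrix.one_apply, *]

lemma sum_op31_pauli : ∑ i, op31 (pauli i) (pauli i) = (2 : ℂ) • swap31 - 1 := by
  ext ⟨a, b, c⟩ ⟨d, e, f⟩
  simp only [Matrix.sum_apply, op31, mul_right_comm _ _ (pauli _ _ _), ← Finset.sum_mul,
    pauli_completeness]
  by_cases b = e <;> simp [swap31, Matrix.one_apply, *]

theorem xxxTriHamiltonian_eq (J : ℝ) :
    xxxTriHamiltonian J
      = ((-3 * J : ℝ) : ℂ) • (1 : Matrix (Fin 2 × Fin 2 × Fin 2) (Fin 2 × Fin 2 × Fin 2) ℂ)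
        + ((2 * J : ℝ) : ℂ) • (swap12 + swap23 + swap31) := by
  rw [xxxTriHamiltonian, Finset.sum_add_distrib, Finset.sum_add_distrib, sum_op12_pauli,
    sum_op23_pauli, sum_op31_pauli]
  push_cast
  module

theorem Matrix.PosSemidef.trace_mul_nonneg {n : Type*} [Fintype n] {A B : Matrix n n ℂ}
    (hA : A.PosSemidef) (hB : B.PosSemidef) : 0 ≤ (A * B).trace := by
  classical
  obtain ⟨C, rfl⟩ : ∃ C : Matrix n n ℂ, A = Cᴴ * C := by
    open scoped MatrixOrder in exact CStarAlgebra.nonneg_iff_eq_star_mul_self.mp hA.nonneg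
  rw [Matrix.mul_assoc, Matrix.trace_mul_comm]
  exact (hB.mul_mul_conjTranspose_same C).trace_nonneg

section TraceProd3

variable (a b c : Matrix (Fin 2) (Fin 2) ℂ)

lemma trace_prod3 : (prod3 a b c).trace = a.trace * b.trace * c.trace := by
  simp [Matrix.trace, prod3, Fintype.sum_prod_type, Fin.sum_univ_two]; ring

lemma trace_prod3_mul_swap12 : (prod3 a b c * swap12).trace = (a * b).trace * c.trace := by
  simp [Matrix.trace, prod3, swap12, Matrix.mul_apply, Fintype.sum_prod_type, Fin.sum_univ_two]
  ring

lemma trace_prod3_mul_swap23 : (prod3 a b c * swap23).trace = a.trace * (b * c).trace := by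
  simp [Matrix.trace, prod3, swap23, Matrix.mul_apply, Fintype.sum_prod_type, Fin.sum_univ_two]
  ring

lemma trace_prod3_mul_swap31 : (prod3 a b c * swap31).trace = (a * c).trace * b.trace := by
  simp [Matrix.trace, prod3, swap31, Matrix.mul_apply, Fintype.sum_prod_type, Fin.sum_univ_two]
  ring

end TraceProd3

lemma trace_prod3_mul_xxxTriHamiltonian (J : ℝ) {ρ₁ ρ₂ ρ₃ : Matrix (Fin 2) (Fin 2) ℂ}
    (h₁ : ρ₁.trace = 1) (h₂ : ρ₂.trace = 1) (h₃ : ρ₃.trace = 1) :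
    (prod3 ρ₁ ρ₂ ρ₃ * xxxTriHamiltonian J).trace
      = ((-3 * J : ℝ) : ℂ)
        + ((2 * J : ℝ) : ℂ) * ((ρ₁ * ρ₂).trace + (ρ₂ * ρ₃).trace + (ρ₁ * ρ₃).trace) := by
  simp only [xxxTriHamiltonian_eq, Matrix.mul_add, Matrix.mul_smul, Matrix.mul_one,
    Matrix.trace_add, Matrix.trace_smul, trace_prod3, trace_prod3_mul_swap12,
    trace_prod3_mul_swap23, trace_prod3_mul_swap31, h₁, h₂, h₃, smul_eq_mul]
  ring

lemma neg_three_mul_le_re_trace_prod3_mul_xxxTriHamiltonian {J : ℝ} (hJ : 0 ≤ J)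
    {ρ₁ ρ₂ ρ₃ : Matrix (Fin 2) (Fin 2) ℂ} (h₁ : ρ₁.PosSemidef ∧ ρ₁.trace = 1)
    (h₂ : ρ₂.PosSemidef ∧ ρ₂.trace = 1) (h₃ : ρ₃.PosSemidef ∧ ρ₃.trace = 1) :
    -3 * J ≤ ((prod3 ρ₁ ρ₂ ρ₃ * xxxTriHamiltonian J).trace).re := by
  have hF : 0 ≤ (ρ₁ * ρ₂).trace + (ρ₂ * ρ₃).trace + (ρ₁ * ρ₃).trace :=
    add_nonneg (add_nonneg (h₁.1.trace_mul_nonneg h₂.1) (h₂.1.trace_mul_nonneg h₃.1))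
      (h₁.1.trace_mul_nonneg h₃.1)
  rw [trace_prod3_mul_xxxTriHamiltonian J h₁.2 h₂.2 h₃.2, Complex.add_re, Complex.ofReal_re,
    Complex.re_ofReal_mul]
  have := (Complex.nonneg_iff.mp hF).1
  nlinarith

lemma le_re_trace_sum_smul_mul {ι n : Type*} [Fintype ι] [Fintype n] {q : ι → ℝ}
    (hq : ∀ k, 0 ≤ q k) (hq₁ : ∑ k, q k = 1) {ρ : ι → Matrix n n ℂ} {H : Matrix n n ℂ} {c : ℝ}
    (h : ∀ k, c ≤ ((ρ k * H).trace).re) :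
    c ≤ (((∑ k, (q k : ℂ) • ρ k) * H).trace).re := by
  simp only [Finset.sum_mul, Matrix.trace_sum, smul_mul_assoc, Matrix.trace_smul, smul_eq_mul,
    Complex.re_sum, Complex.re_ofReal_mul]
  calc c = ∑ k, q k * c := by rw [← Finset.sum_mul, hq₁, one_mul]
    _ ≤ _ := Finset.sum_le_sum fun k _ => mul_le_mul_of_nonneg_left (h k) (hq k)

/-- `H = −3J·𝟙 + 2J(F₁₂ + F₂₃ + F₃₁)`, and consequently every fully
separable tripartite state `ε = Σ_k q_k ρ₁^k ⊗ ρ₂^k ⊗ ρ₃^k` has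
mean energy `Tr[ε H] ≥ −3J` (for `J > 0`). -/
theorem xxx_tripartite_separable_bound (J : ℝ) (hJ : 0 < J) :
    xxxTriHamiltonian J
        = ((-3 * J : ℝ) : ℂ) • (1 : Matrix (Fin 2 × Fin 2 × Fin 2) (Fin 2 × Fin 2 × Fin 2) ℂ)
          + ((2 * J : ℝ) : ℂ) • (swap12 + swap23 + swap31)
    ∧ (∀ (m : ℕ) (q : Fin m → ℝ)
        (ρ₁ ρ₂ ρ₃ : Fin m → Matrix (Fin 2) (Fin 2) ℂ),
        (∀ k, 0 ≤ q k) → (∑ k, q k = 1) →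
        (∀ k, (ρ₁ k).PosSemidef ∧ (ρ₁ k).trace = 1) →
        (∀ k, (ρ₂ k).PosSemidef ∧ (ρ₂ k).trace = 1) →
        (∀ k, (ρ₃ k).PosSemidef ∧ (ρ₃ k).trace = 1) →
        -3 * J ≤ (((∑ k, (q k : ℂ) • prod3 (ρ₁ k) (ρ₂ k) (ρ₃ k))
            * xxxTriHamiltonian J).trace).re) :=
  ⟨xxxTriHamiltonian_eq J, fun _ _ _ _ _ hq hq₁ h₁ h₂ h₃ => le_re_trace_sum_smul_mul hq hq₁
    fun k => neg_three_mul_le_re_trace_prod3_mul_xxxTriHamiltonian hJ.le (h₁ k) (h₂ k) (h₃ k)⟩
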